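/- For every nonnegative integer n, real z and real α: 2·Σ_{k=0}^∞ (-1)^{n+k} J_{(2n+1)(2k+1)}(z)·cos((2n+1)(2k+1)α) = (1/(2n+1))·Σ_{ℓ=0}^{2n} sin(z·cos(α + 2πℓ/(2n+1))). -/

import Mathlib

/-!
The function `θ ↦ exp (i z sin θ)` is smooth and `2π`-periodic, and its Fourier coefficients are
`J_m(z)` by the very definition of `besselJ`; since Fourier coefficients of a `C²` periodic
function are `O(1/m²)`, its Fourier series converges pointwise (Jacobi–Anger expansion).
Evaluating it at `φ ± π/2` gives `sin (z cos φ) = ∑ₘ J_m(z) sin (mπ/2) e^{imφ}`.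
Averaging over the `N = 2n+1` points `α + 2πℓ/N` kills every frequency not divisible by `N`;
among the multiples `m = Nj`, the even ones have `sin (mπ/2) = 0`, and pairing `m` with `-m`
through `J_{-m} = (-1)^m J_m` turns `e^{imα}` into `2 cos (mα)`.
-/

open scoped Real

/-- Bessel function of the first kind of integer order `m`,
defined by `J_m(z) = (1/2π) ∫_0^{2π} e^{i z sin θ - i m θ} dθ`. -/
noncomputable def besselJ (m : ℤ) (z : ℂ) : ℂ :=
  (1 / (2 * Real.pi)) * ∫ θ in (0:ℝ)..(2 * Real.pi),
    Complex.exp (z * Complex.sin (θ:ℂ) * Complex.I - (m:ℂ) * (θ:ℂ) * Complex.I)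

open Complex Filter Function MeasureTheory

section FourierSeries

variable {T : ℝ} {E : Type*} [NormedAddCommGroup E] [NormedSpace ℂ E]

theorem Function.Periodic.periodic_deriv {f : ℝ → E} (hf : Periodic f T) :
    Periodic (deriv f) T :=
  fun x => by rw [← deriv_comp_add_const, hf.funext]

variable [hT : Fact (0 < T)]

theorem norm_fourierCoeff_le {f : AddCircle T → E} {C : ℝ} (hC : ∀ x, ‖f x‖ ≤ C) (n : ℤ) :
    ‖fourierCoeff f n‖ ≤ C := by
  refine (norm_integral_le_of_norm_le_const (C := C) (.of_forall fun t => ?_)).trans_eq (by simp)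
  rw [norm_smul, fourier_apply, Circle.norm_coe, one_mul]
  exact hC t

theorem Function.Periodic.fourierCoeff_lift_eq_fourierCoeffOn {f : ℝ → ℂ} (hf : Periodic f T)
    (a : ℝ) (n : ℤ) :
    fourierCoeff hf.lift n = fourierCoeffOn (lt_add_of_pos_right a hT.out) f n := by
  rw [fourierCoeffOn_eq_integral, fourierCoeff_eq_intervalIntegral _ _ a, add_sub_cancel_left]
  rfl

theorem Function.Periodic.fourierCoeff_lift_eq_mul_deriv {f : ℝ → ℂ} (hf : Periodic f T)
    (hd : Differentiable ℝ f) (hc : Continuous (deriv f)) {n : ℤ} (hn : n ≠ 0) :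
    fourierCoeff hf.lift n = T / (2 * π * I * n) * fourierCoeff hf.periodic_deriv.lift n := by
  rw [hf.fourierCoeff_lift_eq_fourierCoeffOn 0,
    hf.periodic_deriv.fourierCoeff_lift_eq_fourierCoeffOn 0,
    fourierCoeffOn_of_hasDerivAt _ hn (fun x _ => (hd x).hasDerivAt) (hc.intervalIntegrable _ _),
    hf 0, sub_self, mul_zero, zero_sub]
  push_cast
  ring

theorem Function.Periodic.summable_fourierCoeff_lift {f : ℝ → ℂ} (hf : Periodic f T)
    (hf2 : ContDiff ℝ 2 f) : Summable (fourierCoeff hf.lift) := by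
  have hf1 : ContDiff ℝ 1 (deriv f) := hf2.deriv'
  let f'' : C(AddCircle T, ℂ) := ⟨hf.periodic_deriv.periodic_deriv.lift,
    continuous_coinduced_dom.mpr (hf1.continuous_deriv le_rfl)⟩
  have hbound (n : ℤ) (hn : n ≠ 0) :
      ‖fourierCoeff hf.lift n‖ ≤ (T / (2 * π)) ^ 2 * ‖f''‖ * (1 / (n : ℝ) ^ 2) := by
    rw [hf.fourierCoeff_lift_eq_mul_deriv (hf2.differentiable two_ne_zero)
      (hf2.continuous_deriv one_le_two) hn,
      hf.periodic_deriv.fourierCoeff_lift_eq_mul_deriv (hf1.differentiable one_ne_zero)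
      (hf1.continuous_deriv le_rfl) hn, ← mul_assoc, norm_mul, norm_mul]
    have hf'' : ‖fourierCoeff f'' n‖ ≤ ‖f''‖ := norm_fourierCoeff_le f''.norm_coe_le_norm n
    have hT0 : 0 < T := hT.out
    have hnorm : ‖(T : ℂ) / (2 * π * I * n)‖ = T / (2 * π) / |(n : ℝ)| := by
      simp [abs_of_pos hT0, abs_of_pos Real.pi_pos, div_div]
    rw [hnorm]
    calc T / (2 * π) / |(n : ℝ)| * (T / (2 * π) / |(n : ℝ)|) * ‖fourierCoeff f'' n‖
        ≤ T / (2 * π) / |(n : ℝ)| * (T / (2 * π) / |(n : ℝ)|) * ‖f''‖ := by gcongr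
      _ = (T / (2 * π)) ^ 2 * ‖f''‖ * (1 / (n : ℝ) ^ 2) := by
        rw [← sq_abs (n : ℝ)]; field_simp
  exact .of_norm_bounded_eventually
    ((Real.summable_one_div_int_pow.mpr one_lt_two).mul_left _)
    ((eventually_cofinite_ne 0).mono hbound)

theorem Function.Periodic.hasSum_fourier_series {f : ℝ → ℂ} (hf : Periodic f T)
    (hf2 : ContDiff ℝ 2 f) (x : ℝ) :
    HasSum (fun n => fourierCoeff hf.lift n • fourier n (x : AddCircle T)) (f x) :=
  has_pointwise_sum_fourier_series_of_summable
    (f := ⟨hf.lift, continuous_coinduced_dom.mpr hf2.continuous⟩)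
    (hf.summable_fourierCoeff_lift hf2) x

end FourierSeries

theorem sum_range_exp_int_mul_equispaced {N : ℕ} (hN : N ≠ 0) (m : ℤ) (β : ℝ) :
    ∑ ℓ ∈ Finset.range N, exp (m * ↑(β + 2 * π * ℓ / N) * I)
      = if (N : ℤ) ∣ m then N * exp (m * β * I) else 0 := by
  have hζ := isPrimitiveRoot_exp N hN
  have hterm (ℓ : ℕ) :
      exp (m * ↑(β + 2 * π * ℓ / N) * I) = exp (m * β * I) * (exp (2 * π * I / N) ^ m) ^ ℓ := by
    rw [← exp_int_mul, ← exp_nat_mul, ← exp_add]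
    push_cast
    ring_nf
  simp_rw [hterm, ← Finset.mul_sum]
  generalize exp (2 * π * I / N) = ζ at hζ
  split_ifs with hdvd
  · simp [(hζ.zpow_eq_one_iff_dvd m).mpr hdvd, mul_comm]
  · have hpow : (ζ ^ m) ^ N = 1 := by
      rw [← zpow_natCast, ← zpow_mul, mul_comm, zpow_mul, zpow_natCast, hζ.pow_eq_one, one_zpow]
    rw [geom_sum_eq (mt (hζ.zpow_eq_one_iff_dvd m).mp hdvd), hpow, sub_self, zero_div, mul_zero]

theorem hasSum_sum_range_equispaced {c : ℤ → ℂ} {g : ℝ → ℂ}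
    (hg : ∀ θ : ℝ, HasSum (fun m : ℤ => c m * exp (m * θ * I)) (g θ)) {N : ℕ} (hN : N ≠ 0)
    (β : ℝ) :
    HasSum (fun j : ℤ => N * c (N * j) * exp ((N * j : ℤ) * β * I))
      (∑ ℓ ∈ Finset.range N, g (β + 2 * π * ℓ / N)) := by
  have hsum := hasSum_sum fun ℓ (_ : ℓ ∈ Finset.range N) => hg (β + 2 * π * ℓ / N)
  simp_rw [← Finset.mul_sum, sum_range_exp_int_mul_equispaced hN, mul_ite, mul_zero] at hsum
  have hinj : Injective fun j : ℤ => (N : ℤ) * j := mul_right_injective₀ (by exact_mod_cast hN)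
  refine ((hinj.hasSum_iff fun m hm => if_neg fun ⟨j, hj⟩ => hm ⟨j, hj.symm⟩).mpr hsum).congr_fun
    fun j => ?_
  simp only [comp_apply, dvd_mul_right, if_true]
  ring

theorem HasSum.nat_odd_add_neg {M : Type*} [AddCommMonoid M] [TopologicalSpace M] {f : ℤ → M}
    {S : M} (hf : HasSum f S) (heven : ∀ j, Even j → f j = 0) :
    HasSum (fun k : ℕ => f (2 * k + 1) + f (-(2 * k + 1))) S := by
  have hinj : Injective fun k : ℤ => 2 * k + 1 := fun a b h => by simpa using h
  have hodd := (hinj.hasSum_iff fun j hj =>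
    heven j (Int.not_odd_iff_even.mp fun ⟨k, hk⟩ => hj ⟨k, hk.symm⟩)).mpr hf
  refine hodd.nat_add_neg_add_one.congr_fun fun k => ?_
  simp only [comp_apply]
  ring_nf

theorem sin_int_mul_pi_div_two_of_even {m : ℤ} (hm : Even m) : sin (m * π / 2) = 0 := by
  obtain ⟨t, rfl⟩ := hm
  rw [show ((t + t : ℤ) : ℂ) * π / 2 = t * π by push_cast; ring, sin_int_mul_pi]

theorem sin_odd_mul_odd_mul_pi_div_two (n k : ℕ) :
    sin (((2 * n + 1) * (2 * k + 1) : ℤ) * π / 2) = (-1) ^ (n + k) := by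
  rw [show (((2 * n + 1) * (2 * k + 1) : ℤ) : ℂ) * π / 2
      = π / 2 + ↑(2 * (n * k) + (n + k)) * π by push_cast; ring,
    sin_antiperiodic.add_nat_mul_eq, sin_pi_div_two, mul_one, pow_add, pow_mul, neg_one_sq,
    one_pow, one_mul]

instance : Fact (0 < 2 * π) := ⟨Real.two_pi_pos⟩

theorem periodic_exp_mul_sin (z : ℂ) : Periodic (fun θ : ℝ => exp (z * sin θ * I)) (2 * π) :=
  fun θ => by push_cast; rw [sin_add_two_pi]

theorem periodic_besselJ_integrand (m : ℤ) (z : ℂ) :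
    Periodic (fun θ : ℝ => exp (z * sin θ * I - m * θ * I)) (2 * π) := fun θ => by
  dsimp only
  rw [show z * sin ↑(θ + 2 * π) * I - m * ↑(θ + 2 * π) * I
      = z * sin θ * I - m * θ * I + (-m : ℤ) * (2 * π * I) by push_cast; rw [sin_add_two_pi]; ring,
    exp_add, exp_int_mul_two_pi_mul_I, mul_one]

theorem fourierCoeff_exp_mul_sin (z : ℂ) (m : ℤ) :
    fourierCoeff (periodic_exp_mul_sin z).lift m = besselJ m z := by
  rw [fourierCoeff_eq_intervalIntegral _ _ 0, zero_add, besselJ, real_smul]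
  push_cast
  congr 1
  refine intervalIntegral.integral_congr fun θ _ => ?_
  rw [Periodic.lift_coe, fourier_coe_apply, smul_eq_mul, ← exp_add]
  congr 1
  field_simp
  push_cast
  ring

theorem hasSum_besselJ_mul_exp (z : ℂ) (θ : ℝ) :
    HasSum (fun m : ℤ => besselJ m z * exp (m * θ * I)) (exp (z * sin θ * I)) := by
  have hsmooth : ContDiff ℝ 2 (fun θ : ℝ => exp (z * sin θ * I)) :=
    ((((contDiff_sin.restrict_scalars ℝ).comp ofRealCLM.contDiff).const_smul z).mul
      contDiff_const).cexp
  convert (periodic_exp_mul_sin z).hasSum_fourier_series hsmooth θ using 2 with m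
  rw [fourierCoeff_exp_mul_sin, fourier_coe_apply, smul_eq_mul]
  congr 2
  push_cast
  field_simp

theorem besselJ_neg (m : ℤ) (z : ℂ) : besselJ (-m) z = (-1) ^ m * besselJ m z := by
  have hreflect (θ : ℝ) : exp (z * sin θ * I - (-m : ℤ) * θ * I)
      = (-1) ^ m * exp (z * sin ↑(π - θ) * I - m * ↑(π - θ) * I) := by
    rw [← exp_pi_mul_I, ← exp_int_mul, ← exp_add]
    push_cast
    rw [sin_pi_sub]
    ring_nf
  have hshift := (periodic_besselJ_integrand m z).intervalIntegral_add_eq (-π) 0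
  rw [show -π + 2 * π = π by ring, zero_add] at hshift
  rw [besselJ, besselJ, intervalIntegral.integral_congr fun θ _ => hreflect θ,
    intervalIntegral.integral_const_mul,
    intervalIntegral.integral_comp_sub_left (fun θ : ℝ => exp (z * sin θ * I - m * θ * I)),
    show π - 2 * π = -π by ring, sub_zero, hshift]
  ring

theorem hasSum_besselJ_mul_sin_mul_exp (z : ℂ) (φ : ℝ) :
    HasSum (fun m : ℤ => besselJ m z * sin (m * π / 2) * exp (m * φ * I)) (sin (z * cos φ)) := by
  have hsin : sin (z * cos φ)
      = (exp (z * sin ↑(φ + π / 2) * I) - exp (z * sin ↑(φ - π / 2) * I)) / (2 * I) := by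
    push_cast
    rw [sin_add_pi_div_two, sin_sub_pi_div_two, Complex.sin]
    field_simp
    ring_nf
    rw [I_sq]
    ring
  rw [hsin]
  refine (((hasSum_besselJ_mul_exp z _).sub (hasSum_besselJ_mul_exp z _)).div_const _).congr_fun
    fun m => ?_
  push_cast
  rw [Complex.sin, show (m : ℂ) * (φ + π / 2) * I = m * φ * I + m * π / 2 * I by ring,
    show (m : ℂ) * (φ - π / 2) * I = m * φ * I + -(m * π / 2 * I) by ring, exp_add, exp_add,
    show -((m : ℂ) * π / 2 * I) = -(m * π / 2) * I by ring]
  field_simp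
  ring_nf
  rw [I_sq]
  ring

theorem besselJ_mul_sin_mul_exp_add_neg {M : ℤ} (hM : Odd M) (z : ℂ) (α : ℝ) :
    besselJ M z * sin (M * π / 2) * exp (M * α * I)
      + besselJ (-M) z * sin (↑(-M) * π / 2) * exp (↑(-M) * α * I)
      = 2 * besselJ M z * sin (M * π / 2) * cos (M * α) := by
  rw [besselJ_neg, hM.neg_one_zpow, Complex.cos, Int.cast_neg,
    show -(M : ℂ) * π / 2 = -(M * π / 2) by ring, sin_neg,
    show -((M : ℂ) * α) * I = -M * α * I by ring]
  ring

theorem hasSum_sum_sin_mul_cos_equispaced (n : ℕ) (z α : ℝ) :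
    HasSum (fun k : ℕ => ((2 * n + 1 : ℕ) : ℂ) * (2 * ((-1 : ℂ) ^ (n + k) *
      besselJ ((2 * n + 1) * (2 * k + 1)) z * (Real.cos ((2 * n + 1) * (2 * k + 1) * α) : ℂ))))
      (∑ ℓ ∈ Finset.range (2 * n + 1),
        (Real.sin (z * Real.cos (α + 2 * π * ℓ / (2 * n + 1))) : ℂ)) := by
  have hS : ∑ ℓ ∈ Finset.range (2 * n + 1),
      (Real.sin (z * Real.cos (α + 2 * π * ℓ / (2 * n + 1))) : ℂ)
      = ∑ ℓ ∈ Finset.range (2 * n + 1), sin (z * cos ↑(α + 2 * π * ℓ / (2 * n + 1 : ℕ))) := by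
    push_cast
    rfl
  rw [hS]
  have hsample := hasSum_sum_range_equispaced (hasSum_besselJ_mul_sin_mul_exp z)
    (N := 2 * n + 1) (by omega) α
  refine (hsample.nat_odd_add_neg fun j hj => ?_).congr_fun fun k => ?_
  · simp only [sin_int_mul_pi_div_two_of_even (hj.mul_left _), mul_zero, zero_mul]
  have hpair := besselJ_mul_sin_mul_exp_add_neg (⟨2 * n * k + n + k, by ring⟩ :
    Odd ((2 * n + 1) * (2 * k + 1) : ℤ)) z α
  simp only [show ((2 * n + 1 : ℕ) : ℤ) * (2 * k + 1) = (2 * n + 1) * (2 * k + 1) by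
      push_cast; ring,
    show ((2 * n + 1 : ℕ) : ℤ) * -(2 * k + 1) = -((2 * n + 1) * (2 * k + 1)) by
      push_cast; ring]
  rw [sin_odd_mul_odd_mul_pi_div_two] at hpair ⊢
  push_cast at hpair ⊢
  linear_combination (-(2 * n + 1 : ℂ)) * hpair

theorem statement10 (n : ℕ) (z α : ℝ) :
    2 * ∑' k : ℕ,
        (-1 : ℂ) ^ (n + k) * besselJ ((2 * n + 1) * (2 * k + 1)) z *
          (Real.cos ((2 * n + 1) * (2 * k + 1) * α) : ℂ) =
      (1 / ((2 * n + 1 : ℕ) : ℂ)) * ∑ ℓ ∈ Finset.range (2 * n + 1),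
        (Real.sin (z * Real.cos (α + 2 * π * ℓ / (2 * n + 1))) : ℂ) := by
  rw [← (hasSum_sum_sin_mul_cos_equispaced n z α).tsum_eq, tsum_mul_left, tsum_mul_left, one_div,
    inv_mul_cancel_left₀ (Nat.cast_ne_zero.mpr (by omega))]
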